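/- Let 0 < α ≤ 1 and H a subgraph of graph G with e(H) ≥ α·e(G). If λ̄_H is the spectral gap of the normalized Laplacian of H, then q*(G) ≤ 1 − α·min{α, 1 − λ̄_H}. -/

import Mathlib

open Finset
open scoped Classical

noncomputable section

variable {V : Type*} [Fintype V]

/-- Number of edges between `A` and `B` (each cross edge counted once when `A`,`B` disjoint). -/
def ecut (G : SimpleGraph V) (A B : Finset V) : ℝ :=
  ((A ×ˢ B).filter fun p => G.Adj p.1 p.2).card

/-- Number of edges inside `A`. -/
def ein (G : SimpleGraph V) (A : Finset V) : ℝ := ecut G A A / 2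

/-- Volume of a vertex set: sum of degrees. -/
def gvol (G : SimpleGraph V) (A : Finset V) : ℝ := ∑ v ∈ A, (G.degree v : ℝ)

/-- Number of edges of `G`. -/
def edgecount (G : SimpleGraph V) : ℝ := (G.edgeFinset.card : ℝ)

/-- Conductance (Cheeger constant) `h_G`. -/
def conduct (G : SimpleGraph V) : ℝ :=
  sInf { x | ∃ A : Finset V, A.Nonempty ∧ A ≠ univ ∧
    x = ecut G A Aᶜ / min (gvol G A) (gvol G Aᶜ) }

/-- Expansion-by-products `ĥ_G`. -/
def hhat (G : SimpleGraph V) : ℝ :=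
  sInf { x | ∃ A : Finset V, A.Nonempty ∧ A ≠ univ ∧
    x = ecut G A Aᶜ * gvol G univ / (gvol G A * gvol G Aᶜ) }

/-- Modularity score of a vertex partition. -/
def modScore (G : SimpleGraph V) (P : Finpartition (univ : Finset V)) : ℝ :=
  (∑ A ∈ P.parts, ein G A) / edgecount G
    - (∑ A ∈ P.parts, (gvol G A) ^ 2) / (4 * (edgecount G) ^ 2)

/-- Modularity `q*(G)`: maximum modularity score over vertex partitions. -/
def modularity (G : SimpleGraph V) : ℝ :=
  sSup { x | ∃ P : Finpartition (univ : Finset V), x = modScore G P }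

/-- The normalized Laplacian `ℒ_H = I - D^{-1/2} A D^{-1/2}`. -/
def nlap {V : Type*} [Fintype V] (H : SimpleGraph V) : Matrix V V ℝ :=
  1 - (Matrix.diagonal fun v => ((H.degree v : ℝ)) ^ (-(1 / 2 : ℝ))) * (H.adjMatrix ℝ)
      * (Matrix.diagonal fun v => ((H.degree v : ℝ)) ^ (-(1 / 2 : ℝ)))

/-! ### Auxiliary lemmas -/

set_option linter.unusedSectionVars false

open Matrix

section QF
variable {M : Matrix V V ℝ} (hM : M.IsHermitian)

/-- The eigenvectors of a real symmetric matrix, as plain functions. -/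
def evec (hM : M.IsHermitian) (i : V) : V → ℝ :=
  (WithLp.equiv 2 _) (hM.eigenvectorBasis i)

lemma evec_dot (i j : V) : evec hM i ⬝ᵥ evec hM j = if i = j then 1 else 0 := by
  have h := hM.eigenvectorBasis.orthonormal
  rw [orthonormal_iff_ite] at h
  have := h i j
  rw [PiLp.inner_apply] at this
  simpa [evec, dotProduct, mul_comm] using this

lemma evec_mulVec (i : V) : M *ᵥ evec hM i = hM.eigenvalues i • evec hM i :=
  hM.mulVec_eigenvectorBasis i

lemma evec_expand (x : V → ℝ) : x = ∑ i, (evec hM i ⬝ᵥ x) • evec hM i := by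
  have h := hM.eigenvectorBasis.sum_repr ((WithLp.equiv 2 _).symm x)
  have h2 := congrArg (WithLp.linearEquiv 2 ℝ (V → ℝ)) h
  rw [map_sum] at h2
  simp only [LinearEquiv.map_smul, WithLp.linearEquiv_apply, Equiv.apply_symm_apply] at h2
  have hrepr : ∀ i, hM.eigenvectorBasis.repr ((WithLp.equiv 2 (V → ℝ)).symm x) i
      = evec hM i ⬝ᵥ x := by
    intro i
    rw [hM.eigenvectorBasis.repr_apply_apply, PiLp.inner_apply]
    rw [evec, dotProduct]
    refine Finset.sum_congr rfl fun k _ => ?_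
    simp only [RCLike.inner_apply, starRingEnd_apply, star_trivial, WithLp.equiv_symm_apply,
      WithLp.equiv_apply, WithLp.ofLp_toLp, mul_comm]
  simp only [hrepr] at h2
  exact h2.symm

lemma dot_sum_left {ι : Type*} (s : Finset ι) (f : ι → V → ℝ) (y : V → ℝ) :
    (∑ i ∈ s, f i) ⬝ᵥ y = ∑ i ∈ s, f i ⬝ᵥ y := by
  simp only [dotProduct, Finset.sum_apply, Finset.sum_mul]
  exact Finset.sum_comm

lemma dot_sum_right {ι : Type*} (s : Finset ι) (y : V → ℝ) (f : ι → V → ℝ) :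
    y ⬝ᵥ (∑ i ∈ s, f i) = ∑ i ∈ s, y ⬝ᵥ f i := by
  simp only [dotProduct, Finset.sum_apply, Finset.mul_sum]
  exact Finset.sum_comm

lemma qf_eq (x : V → ℝ) :
    x ⬝ᵥ M *ᵥ x = ∑ i, hM.eigenvalues i * (evec hM i ⬝ᵥ x) ^ 2 := by
  conv_lhs => rw [evec_expand hM x, ← Matrix.mulVecLin_apply, map_sum]
  simp only [_root_.map_smul, Matrix.mulVecLin_apply, evec_mulVec hM]
  rw [dot_sum_left]
  simp only [smul_dotProduct, dot_sum_right, dotProduct_smul, smul_eq_mul, smul_smul]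
  simp only [Finset.mul_sum]
  refine Finset.sum_congr rfl fun i _ => ?_
  rw [Finset.sum_eq_single i]
  · rw [evec_dot hM]; simp; ring
  · intro j _ hj
    simp only [evec_dot hM]
    simp [hj, Ne.symm hj]
  · simp

lemma dot_self_eq (x : V → ℝ) : x ⬝ᵥ x = ∑ i, (evec hM i ⬝ᵥ x) ^ 2 := by
  conv_lhs => rw [evec_expand hM x]
  rw [dot_sum_left]
  simp only [smul_dotProduct, dot_sum_right, dotProduct_smul, smul_eq_mul, smul_smul]
  refine Finset.sum_congr rfl fun i _ => ?_
  rw [Finset.sum_eq_single i]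
  · rw [evec_dot hM]; simp; ring
  · intro j _ hj
    simp only [evec_dot hM]
    simp [hj, Ne.symm hj]
  · simp

lemma herm_dot {N : Matrix V V ℝ} (hM : N.IsHermitian) (x y : V → ℝ) :
    x ⬝ᵥ N *ᵥ y = (N *ᵥ x) ⬝ᵥ y := by
  have hT : Nᵀ = N := by
    rw [← Matrix.conjTranspose_eq_transpose_of_trivial]; exact hM
  rw [Matrix.dotProduct_mulVec, ← Matrix.mulVec_transpose, hT]

end QF

section Comb

lemma ecut_eq_sum (G : SimpleGraph V) (A B : Finset V) :
    ecut G A B = ∑ v ∈ A, ∑ w ∈ B, (if G.Adj v w then (1:ℝ) else 0) := by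
  rw [ecut, ← Finset.sum_product']
  rw [← Finset.sum_boole]

lemma ecut_nonneg (G : SimpleGraph V) (A B : Finset V) : 0 ≤ ecut G A B := by
  rw [ecut]; positivity

lemma degree_sum_eq (G : SimpleGraph V) (v : V) :
    ∑ w : V, (if G.Adj v w then (1:ℝ) else 0) = G.degree v := by
  rw [Finset.sum_boole]
  congr 1
  rw [← SimpleGraph.card_neighborFinset_eq_degree]
  congr 1
  ext w
  simp [SimpleGraph.mem_neighborFinset]

lemma ecut_univ (G : SimpleGraph V) (A : Finset V) : ecut G A univ = gvol G A := by
  rw [ecut_eq_sum, gvol]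
  exact Finset.sum_congr rfl fun v _ => degree_sum_eq G v

lemma ecut_split (G : SimpleGraph V) (A : Finset V) :
    ecut G A A + ecut G A Aᶜ = gvol G A := by
  rw [← ecut_univ G A, ecut_eq_sum, ecut_eq_sum, ecut_eq_sum, ← Finset.sum_add_distrib]
  exact Finset.sum_congr rfl fun v _ => Finset.sum_add_sum_compl A _

lemma gvol_nonneg (G : SimpleGraph V) (A : Finset V) : 0 ≤ gvol G A :=
  Finset.sum_nonneg fun v _ => by positivity

lemma gvol_univ (G : SimpleGraph V) : gvol G univ = 2 * edgecount G := by
  rw [gvol, edgecount]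
  rw [← Nat.cast_sum]
  rw [SimpleGraph.sum_degrees_eq_twice_card_edges]
  push_cast
  ring

lemma gvol_mono_graph {G H : SimpleGraph V} (hle : H ≤ G) (A : Finset V) :
    gvol H A ≤ gvol G A := by
  refine Finset.sum_le_sum fun v _ => ?_
  have : H.neighborFinset v ⊆ G.neighborFinset v := fun w hw => by
    rw [SimpleGraph.mem_neighborFinset] at *
    exact hle hw
  exact_mod_cast Finset.card_le_card this

lemma gvol_le_univ (G : SimpleGraph V) (A : Finset V) : gvol G A ≤ gvol G univ :=
  Finset.sum_le_sum_of_subset_of_nonneg (Finset.subset_univ A) (fun v _ _ => by positivity)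

lemma gvol_compl (G : SimpleGraph V) (A : Finset V) :
    gvol G Aᶜ = gvol G univ - gvol G A := by
  have := Finset.sum_add_sum_compl A fun v => (G.degree v : ℝ)
  rw [gvol, gvol, gvol]; linarith

lemma ecut_sdiff_split {G H : SimpleGraph V} (hle : H ≤ G) (A B : Finset V) :
    ecut G A B = ecut H A B + ecut (G \ H) A B := by
  rw [ecut_eq_sum, ecut_eq_sum, ecut_eq_sum, ← Finset.sum_add_distrib]
  refine Finset.sum_congr rfl fun v _ => ?_
  rw [← Finset.sum_add_distrib]
  refine Finset.sum_congr rfl fun w _ => ?_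
  by_cases hH : H.Adj v w
  · simp [hH, hle hH, SimpleGraph.sdiff_adj]
  · by_cases hG : G.Adj v w <;> simp [hH, hG, SimpleGraph.sdiff_adj]

lemma edgecount_sdiff {G H : SimpleGraph V} (hle : H ≤ G) :
    edgecount (G \ H) = edgecount G - edgecount H := by
  have h := ecut_sdiff_split hle univ univ
  rw [ecut_univ, ecut_univ, ecut_univ, gvol_univ, gvol_univ, gvol_univ] at h
  linarith

lemma edgecount_nonneg (G : SimpleGraph V) : 0 ≤ edgecount G := by
  rw [edgecount]; positivity

lemma part_sum_gvol (K : SimpleGraph V) (P : Finpartition (univ : Finset V)) :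
    ∑ A ∈ P.parts, gvol K A = gvol K univ := by
  simp only [gvol]
  conv_rhs => rw [← Finpartition.biUnion_parts P]
  rw [Finset.sum_biUnion (P.supIndep.pairwiseDisjoint)]
  simp

lemma part_sum_ecut_le (K : SimpleGraph V) (P : Finpartition (univ : Finset V)) :
    ∑ A ∈ P.parts, ecut K A A ≤ gvol K univ := by
  rw [← ecut_univ K univ]
  simp only [ecut_eq_sum, ← Finset.sum_product']
  have hdisj : (P.parts : Set (Finset V)).PairwiseDisjoint (fun A => A ×ˢ A) := by
    intro A hA B hB hAB
    have h := P.supIndep.pairwiseDisjoint hA hB hAB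
    simp only [Function.onFun, id] at h ⊢
    rw [Finset.disjoint_left] at h ⊢
    intro p hp hp2
    rw [Finset.mem_product] at hp hp2
    exact h hp.1 hp2.1
  rw [← Finset.sum_biUnion hdisj]
  refine Finset.sum_le_sum_of_subset_of_nonneg ?_ (fun p _ _ => by positivity)
  intro p _
  exact Finset.mem_product.2 ⟨Finset.mem_univ _, Finset.mem_univ _⟩

lemma part_sum_ein_le (K : SimpleGraph V) (P : Finpartition (univ : Finset V)) :
    ∑ A ∈ P.parts, ein K A ≤ edgecount K := by
  simp only [ein, ← Finset.sum_div]
  have h := part_sum_ecut_le K P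
  rw [gvol_univ] at h
  linarith

end Comb

section Mix

/-- `√(deg v)`. -/
def dsqrt (H : SimpleGraph V) : V → ℝ := fun v => Real.sqrt (H.degree v)
/-- `(deg v)^{-1/2}`. -/
def dinv (H : SimpleGraph V) : V → ℝ := fun v => ((H.degree v : ℝ)) ^ (-(1/2 : ℝ))

variable (H : SimpleGraph V)

lemma dinv_mul_dsqrt {v : V} (h : H.degree v ≠ 0) : dinv H v * dsqrt H v = 1 := by
  have hp : (0:ℝ) < (H.degree v : ℝ) := by positivity
  rw [dinv, dsqrt, Real.sqrt_eq_rpow, ← Real.rpow_add hp]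
  norm_num

lemma dinv_mul_deg (v : V) : dinv H v * (H.degree v : ℝ) = dsqrt H v := by
  by_cases h : H.degree v = 0
  · simp [h, dinv, dsqrt]
  · have hp : (0:ℝ) < (H.degree v : ℝ) := by positivity
    rw [dinv, dsqrt, Real.sqrt_eq_rpow]
    nth_rewrite 2 [show ((H.degree v : ℝ)) = ((H.degree v : ℝ)) ^ (1:ℝ) by rw [Real.rpow_one]]
    rw [← Real.rpow_add hp]
    norm_num

lemma deg_ne_zero_of_adj {v w : V} (h : H.Adj v w) : H.degree v ≠ 0 := by
  have h1 : w ∈ H.neighborFinset v := by rwa [SimpleGraph.mem_neighborFinset]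
  have h2 := Finset.card_pos.2 ⟨w, h1⟩
  rw [SimpleGraph.card_neighborFinset_eq_degree] at h2
  omega

lemma nlap_mulVec_apply (x : V → ℝ) (v : V) :
    (nlap H *ᵥ x) v = x v - dinv H v * ∑ w ∈ H.neighborFinset v, dinv H w * x w := by
  rw [nlap, Matrix.sub_mulVec, Matrix.one_mulVec]
  simp only [Pi.sub_apply]
  congr 1
  rw [← Matrix.mulVec_mulVec, ← Matrix.mulVec_mulVec]
  rw [Matrix.mulVec_diagonal]
  rw [dinv]
  congr 1
  rw [SimpleGraph.adjMatrix_mulVec_apply]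
  exact Finset.sum_congr rfl fun w _ => Matrix.mulVec_diagonal _ _ _

lemma nlap_dsqrt : nlap H *ᵥ dsqrt H = 0 := by
  funext v
  rw [Pi.zero_apply, nlap_mulVec_apply]
  have hsum : ∑ w ∈ H.neighborFinset v, dinv H w * dsqrt H w = (H.degree v : ℝ) := by
    rw [← SimpleGraph.card_neighborFinset_eq_degree]
    rw [Finset.card_eq_sum_ones, Nat.cast_sum]
    refine Finset.sum_congr rfl fun w hw => ?_
    rw [SimpleGraph.mem_neighborFinset] at hw
    rw [dinv_mul_dsqrt H (deg_ne_zero_of_adj H hw.symm)]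
    norm_num
  rw [hsum, dinv_mul_deg]
  ring

lemma quad_eq_cut (A : Finset V) :
    (fun v => if v ∈ A then dsqrt H v else 0) ⬝ᵥ
      (nlap H *ᵥ (fun v => if v ∈ A then dsqrt H v else 0)) = ecut H A Aᶜ := by
  set u : V → ℝ := fun v => if v ∈ A then dsqrt H v else 0 with hudef
  have key : ∀ v, u v * (nlap H *ᵥ u) v
      = (if v ∈ A then (H.degree v : ℝ) else 0)
        - (if v ∈ A then ∑ w ∈ A, (if H.Adj v w then (1:ℝ) else 0) else 0) := by
    intro v
    rw [nlap_mulVec_apply]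
    by_cases hv : v ∈ A
    · by_cases hd : H.degree v = 0
      · have hnoadj : ∀ w, ¬ H.Adj v w := fun w hw => deg_ne_zero_of_adj H hw hd
        simp [hudef, hv, hd, dsqrt, hnoadj]
      · have h1 : u v = dsqrt H v := by simp [hudef, hv]
        have hin : ∑ w ∈ H.neighborFinset v, dinv H w * u w
            = ∑ w ∈ A, (if H.Adj v w then (1:ℝ) else 0) := by
          have e1 : ∑ w ∈ H.neighborFinset v, dinv H w * u w
              = ∑ w ∈ H.neighborFinset v, (if w ∈ A then (1:ℝ) else 0) := by
            refine Finset.sum_congr rfl fun w hw => ?_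
            rw [SimpleGraph.mem_neighborFinset] at hw
            by_cases hwA : w ∈ A
            · simp only [hudef, hwA, if_true]
              exact dinv_mul_dsqrt H (deg_ne_zero_of_adj H hw.symm)
            · simp [hudef, hwA]
          rw [e1, Finset.sum_boole, Finset.sum_boole]
          congr 2
          ext w
          simp only [Finset.mem_filter, SimpleGraph.mem_neighborFinset]
          tauto
        rw [h1, hin]
        simp only [hv, if_true]
        rw [mul_sub]
        congr 1
        · exact Real.mul_self_sqrt (by positivity)
        · rw [← mul_assoc, mul_comm (dsqrt H v) (dinv H v), dinv_mul_dsqrt H hd, one_mul]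
    · simp [hudef, hv]
  have hdot : u ⬝ᵥ (nlap H *ᵥ u) = ∑ v, u v * (nlap H *ᵥ u) v := rfl
  rw [hdot]
  simp only [key]
  rw [Finset.sum_sub_distrib]
  rw [Finset.sum_ite_mem, Finset.univ_inter, Finset.sum_ite_mem, Finset.univ_inter]
  have h1 : ∑ v ∈ A, ∑ w ∈ A, (if H.Adj v w then (1:ℝ) else 0) = ecut H A A :=
    (ecut_eq_sum H A A).symm
  rw [h1]
  have h2 := ecut_split H A
  rw [show (∑ v ∈ A, (H.degree v : ℝ)) = gvol H A from rfl]
  linarith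

lemma mix {H : SimpleGraph V} (hHerm : (nlap H).IsHermitian) {lam : ℝ} {i₀ : V}
    (hzero : hHerm.eigenvalues i₀ = 0)
    (hub : ∀ i : V, i ≠ i₀ → |1 - hHerm.eigenvalues i| ≤ lam)
    (hlt : lam < 1) (A : Finset V) :
    (1 - lam) * (gvol H A * gvol H Aᶜ) ≤ ecut H A Aᶜ * gvol H univ := by
  classical
  set f : V → ℝ := dsqrt H with hfdef
  set u : V → ℝ := fun v => if v ∈ A then dsqrt H v else 0 with hudef
  have hb0 : 0 ≤ gvol H A := gvol_nonneg H A
  have hvol0 : 0 ≤ gvol H univ := gvol_nonneg H univ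
  have hMf : nlap H *ᵥ f = 0 := nlap_dsqrt H
  set c : V → ℝ := fun i => evec hHerm i ⬝ᵥ f with hcdef
  set s : V → ℝ := fun i => evec hHerm i ⬝ᵥ u with hsdef
  have hlpos : ∀ i, i ≠ i₀ → 1 - lam ≤ hHerm.eigenvalues i := by
    intro i hi
    have h := abs_le.1 (hub i hi)
    linarith [h.2]
  have hc0 : ∀ i, i ≠ i₀ → c i = 0 := by
    intro i hi
    have h2 : (nlap H *ᵥ evec hHerm i) ⬝ᵥ f = evec hHerm i ⬝ᵥ (nlap H *ᵥ f) :=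
      (herm_dot hHerm _ _).symm
    rw [evec_mulVec hHerm, hMf] at h2
    have h1 : hHerm.eigenvalues i * c i = 0 := by
      simpa [smul_dotProduct, smul_eq_mul] using h2
    have h3 : hHerm.eigenvalues i ≠ 0 := by
      have := hlpos i hi; intro h; rw [h] at this; linarith
    exact (mul_eq_zero.1 h1).resolve_left h3
  have hff : f ⬝ᵥ f = gvol H univ := by
    rw [gvol, dotProduct]
    refine Finset.sum_congr rfl fun v _ => ?_
    rw [hfdef]; exact Real.mul_self_sqrt (by positivity)
  have huu : u ⬝ᵥ u = gvol H A := by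
    have h : ∀ v, u v * u v = if v ∈ A then (H.degree v : ℝ) else 0 := by
      intro v; rw [hudef]; by_cases hv : v ∈ A
      · simp only [hv, if_true]; exact Real.mul_self_sqrt (by positivity)
      · simp [hv]
    rw [dotProduct]
    simp only [h]
    rw [Finset.sum_ite_mem, Finset.univ_inter, gvol]
  have hfu : f ⬝ᵥ u = gvol H A := by
    have h : ∀ v, f v * u v = if v ∈ A then (H.degree v : ℝ) else 0 := by
      intro v; rw [hudef, hfdef]; by_cases hv : v ∈ A
      · simp only [hv, if_true]; exact Real.mul_self_sqrt (by positivity)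
      · simp [hv]
    rw [dotProduct]
    simp only [h]
    rw [Finset.sum_ite_mem, Finset.univ_inter, gvol]
  have hc2 : c i₀ ^ 2 = gvol H univ := by
    have h := dot_self_eq hHerm f
    rw [hff, Finset.sum_eq_single i₀] at h
    · exact h.symm
    · intro j _ hj
      rw [show evec hHerm j ⬝ᵥ f = c j from rfl, hc0 j hj]
      ring
    · simp
  have hcs : c i₀ * s i₀ = gvol H A := by
    have h2 : f ⬝ᵥ u = ∑ i, c i * s i := by
      conv_lhs => rw [evec_expand hHerm f]
      rw [dot_sum_left]
      simp only [smul_dotProduct, smul_eq_mul]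
      rfl
    rw [hfu, Finset.sum_eq_single i₀] at h2
    · exact h2.symm
    · intro j _ hj
      rw [hc0 j hj]; ring
    · simp
  have hvs : gvol H univ * s i₀ ^ 2 = gvol H A ^ 2 := by
    calc gvol H univ * s i₀ ^ 2 = c i₀ ^ 2 * s i₀ ^ 2 := by rw [hc2]
    _ = (c i₀ * s i₀) ^ 2 := by ring
    _ = gvol H A ^ 2 := by rw [hcs]
  have hcut : u ⬝ᵥ (nlap H *ᵥ u) = ecut H A Aᶜ := quad_eq_cut H A
  have hlow : (1 - lam) * (gvol H A - s i₀ ^ 2) ≤ u ⬝ᵥ (nlap H *ᵥ u) := by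
    rw [qf_eq hHerm u]
    have h1 : ∑ i, (if i = i₀ then (0:ℝ) else (1 - lam) * s i ^ 2)
        ≤ ∑ i, hHerm.eigenvalues i * (evec hHerm i ⬝ᵥ u) ^ 2 := by
      refine Finset.sum_le_sum fun i _ => ?_
      by_cases hi : i = i₀
      · subst hi; rw [hzero]; simp
      · simp only [hi, if_false]
        exact mul_le_mul_of_nonneg_right (hlpos i hi) (sq_nonneg _)
    have h2 : ∑ i, (if i = i₀ then (0:ℝ) else (1 - lam) * s i ^ 2)
        = (1 - lam) * ((u ⬝ᵥ u) - s i₀ ^ 2) := by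
      have h3 : ∀ i, (if i = i₀ then (0:ℝ) else (1 - lam) * s i ^ 2)
          = (1 - lam) * s i ^ 2 - (if i = i₀ then (1 - lam) * s i ^ 2 else 0) := by
        intro i; by_cases hi : i = i₀ <;> simp [hi]
      simp only [h3]
      rw [Finset.sum_sub_distrib, Finset.sum_ite_eq' Finset.univ i₀]
      rw [dot_self_eq hHerm u]
      simp only [Finset.mem_univ, if_true]
      rw [← Finset.mul_sum]
      ring
    rw [huu] at h2
    linarith
  have hfinal : (1 - lam) * (gvol H A - s i₀ ^ 2) * gvol H univ
      ≤ ecut H A Aᶜ * gvol H univ := by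
    rw [← hcut]
    exact mul_le_mul_of_nonneg_right hlow hvol0
  have hAc : gvol H Aᶜ = gvol H univ - gvol H A := gvol_compl H A
  have heq : (1 - lam) * (gvol H A * gvol H Aᶜ)
      = (1 - lam) * (gvol H A - s i₀ ^ 2) * gvol H univ := by
    rw [hAc]
    linear_combination (1 - lam) * hvs
  linarith

end Mix

/-- The per-part polynomial inequality. -/
lemma star_ineq {α β ν m mH a b : ℝ} (hα0 : 0 < α) (hα1 : α ≤ 1) (hν : 0 < ν)
    (hβ : β = min α ν) (hm : 0 < m) (hmH : 0 < mH) (hsize : α * m ≤ mH)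
    (hb0 : 0 ≤ b) (hba : b ≤ a) (hb2 : b ≤ 2 * mH) :
    2 * (α * β) * m ^ 2 * b ≤ ν * m * (b * (2 * mH - b)) + a ^ 2 * mH := by
  have hβα : β ≤ α := hβ ▸ min_le_left _ _
  have hβν : β ≤ ν := hβ ▸ min_le_right _ _
  have hβ0 : 0 < β := hβ ▸ lt_min hα0 hν
  have ha0 : 0 ≤ a := le_trans hb0 hba
  have ha2 : b ^ 2 ≤ a ^ 2 := by nlinarith
  -- it suffices with a replaced by b
  have key : 2 * (α * β) * m ^ 2 * b ≤ ν * m * (b * (2 * mH - b)) + b ^ 2 * mH := by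
    -- g(b) := ν*m*(2mH - b) + b*mH  satisfies 2mH * g(b) ≥ 2mH * 2αβm²
    have h0 : 2 * (α * β) * m ^ 2 ≤ 2 * ν * m * mH := by
      nlinarith [mul_le_mul_of_nonneg_left hsize (by positivity : (0:ℝ) ≤ 2 * ν * m),
        mul_le_mul_of_nonneg_left hβν (by positivity : (0:ℝ) ≤ 2 * α * m ^ 2)]
    have h1 : 2 * (α * β) * m ^ 2 ≤ 2 * mH * mH := by
      have hαm : 0 ≤ α * m := by positivity
      have := mul_le_mul hsize hsize hαm (le_of_lt hmH)
      nlinarith [mul_le_mul_of_nonneg_left hβα (by positivity : (0:ℝ) ≤ 2 * α * m ^ 2)]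
    -- linear interpolation
    nlinarith [mul_nonneg hb0 (sub_nonneg.2 hb2), mul_le_mul_of_nonneg_left h0
        (sub_nonneg.2 hb2), mul_le_mul_of_nonneg_left h1 hb0]
  nlinarith [ha2]

/-- If `H ≤ G` with `e(H) ≥ α e(G)` and `λ̄_H` is the spectral gap of the
normalized Laplacian of `H` (the maximum of `|1 - λ|` over the eigenvalues other than the
trivial zero eigenvalue), then `q*(G) ≤ 1 - α min{α, 1 - λ̄_H}`. -/
theorem stmt6 {V : Type*} [Fintype V] (G H : SimpleGraph V) (hle : H ≤ G)
    (hG : G.edgeFinset.Nonempty) (α : ℝ) (hα0 : 0 < α) (hα1 : α ≤ 1)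
    (hsize : α * edgecount G ≤ edgecount H)
    (hHerm : (nlap H).IsHermitian) (lam : ℝ) (i₀ : V)
    (hzero : hHerm.eigenvalues i₀ = 0)
    (hub : ∀ i : V, i ≠ i₀ → |1 - hHerm.eigenvalues i| ≤ lam)
    (hattain : ∃ i : V, i ≠ i₀ ∧ |1 - hHerm.eigenvalues i| = lam) :
    modularity G ≤ 1 - α * min α (1 - lam) := by
  classical
  have hm : 0 < edgecount G := by
    rw [edgecount]
    exact_mod_cast Finset.card_pos.2 hG
  have hmH : 0 < edgecount H := lt_of_lt_of_le (by positivity) hsize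
  have hVne : (univ : Finset V).Nonempty := by
    by_contra h
    rw [Finset.not_nonempty_iff_eq_empty] at h
    have : edgecount G ≤ 0 := by
      have := gvol_univ G
      rw [gvol, h] at this
      simp at this
      linarith
    linarith
  have hbound : ∀ P : Finpartition (univ : Finset V),
      modScore G P ≤ 1 - α * min α (1 - lam) := by
    intro P
    by_cases hlam : 1 ≤ lam
    · -- trivial case: RHS ≥ 1 ≥ modScore
      have h1 : modScore G P ≤ 1 := by
        rw [modScore]
        have h2 : (∑ A ∈ P.parts, ein G A) / edgecount G ≤ 1 :=
          div_le_one_of_le₀ (part_sum_ein_le G P) (le_of_lt hm)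
        have h3 : 0 ≤ (∑ A ∈ P.parts, gvol G A ^ 2) / (4 * edgecount G ^ 2) := by
          have : (0:ℝ) ≤ ∑ A ∈ P.parts, gvol G A ^ 2 :=
            Finset.sum_nonneg fun A _ => sq_nonneg _
          positivity
        linarith
      have h4 : α * min α (1 - lam) ≤ 0 := by
        have h5 : min α (1 - lam) ≤ 1 - lam := min_le_right _ _
        have h6 : 1 - lam ≤ 0 := by linarith
        nlinarith
      linarith
    · push_neg at hlam
      set m := edgecount G with hmdef
      set mH := edgecount H with hmHdef
      set ν : ℝ := 1 - lam with hνdef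
      set β : ℝ := min α ν with hβdef
      have hν : 0 < ν := by rw [hνdef]; linarith
      have hvolH : gvol H univ = 2 * mH := gvol_univ H
      have key : ∀ A ∈ P.parts,
          ein H A / m - gvol G A ^ 2 / (4 * m ^ 2)
            ≤ (mH / m - α * β) * (gvol H A / (2 * mH)) := by
        intro A _
        set a := gvol G A with hadef
        set b := gvol H A with hbdef
        have hb0 : 0 ≤ b := gvol_nonneg H A
        have hba : b ≤ a := gvol_mono_graph hle A
        have hb2 : b ≤ 2 * mH := by
          have := gvol_le_univ H A
          rw [hvolH] at this
          exact this
        have hmix := mix hHerm hzero hub hlam A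
        rw [hvolH, gvol_compl H A, hvolH] at hmix
        -- hmix : ν * (b * (2mH - b)) ≤ ecut H A Aᶜ * (2mH)
        set E := ecut H A Aᶜ with hEdef
        have hE0 : 0 ≤ E := ecut_nonneg H A Aᶜ
        have hein : ein H A = (b - E) / 2 := by
          rw [ein]
          have := ecut_split H A
          rw [← hbdef, ← hEdef] at this
          linarith
        have hstar := star_ineq hα0 hα1 hν hβdef hm hmH hsize hb0 hba hb2
        have hmixm : ν * m * (b * (2 * mH - b)) ≤ 2 * m * mH * E := by
          have := mul_le_mul_of_nonneg_left hmix (le_of_lt hm)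
          calc ν * m * (b * (2 * mH - b)) = m * ((1 - lam) * (b * (2 * mH - b))) := by
                rw [hνdef]; ring
          _ ≤ m * (E * (2 * mH)) := this
          _ = 2 * m * mH * E := by ring
        have hgoal : 2 * (α * β) * m ^ 2 * b ≤ 2 * m * mH * E + a ^ 2 * mH := by
          linarith
        have expand : (mH / m - α * β) * (b / (2 * mH)) - (ein H A / m - a ^ 2 / (4 * m ^ 2))
            = (2 * m * mH * E + a ^ 2 * mH - 2 * (α * β) * m ^ 2 * b) / (4 * m ^ 2 * mH) := by
          rw [hein]
          field_simp
          ring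
        have hnn : 0 ≤ (2 * m * mH * E + a ^ 2 * mH - 2 * (α * β) * m ^ 2 * b)
            / (4 * m ^ 2 * mH) := by
          apply div_nonneg (by linarith)
          positivity
        linarith [expand ▸ hnn]
      have hsum := Finset.sum_le_sum key
      have hr : ∑ A ∈ P.parts, (mH / m - α * β) * (gvol H A / (2 * mH)) = mH / m - α * β := by
        rw [← Finset.mul_sum, ← Finset.sum_div, part_sum_gvol, hvolH]
        field_simp
      have hsd : ∑ A ∈ P.parts, ein (G \ H) A ≤ m - mH := by
        have h := part_sum_ein_le (G \ H) P
        rw [edgecount_sdiff hle] at h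
        exact h
      have hdec : ∑ A ∈ P.parts, ein G A
          = ∑ A ∈ P.parts, ein H A + ∑ A ∈ P.parts, ein (G \ H) A := by
        rw [← Finset.sum_add_distrib]
        refine Finset.sum_congr rfl fun A _ => ?_
        rw [ein, ein, ein, ecut_sdiff_split hle]
        ring
      rw [modScore]
      have hLHS : (∑ A ∈ P.parts, ein G A) / m - (∑ A ∈ P.parts, gvol G A ^ 2) / (4 * m ^ 2)
          = (∑ A ∈ P.parts, (ein H A / m - gvol G A ^ 2 / (4 * m ^ 2)))
            + (∑ A ∈ P.parts, ein (G \ H) A) / m := by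
        rw [Finset.sum_sub_distrib, ← Finset.sum_div, ← Finset.sum_div, hdec]
        ring
      rw [← hmdef, hLHS]
      have hsd2 : (∑ A ∈ P.parts, ein (G \ H) A) / m ≤ (m - mH) / m :=
        div_le_div_of_nonneg_right hsd (le_of_lt hm)
      have hfin : mH / m - α * β + (m - mH) / m = 1 - α * β := by
        field_simp
        ring
      calc (∑ A ∈ P.parts, (ein H A / m - gvol G A ^ 2 / (4 * m ^ 2)))
            + (∑ A ∈ P.parts, ein (G \ H) A) / m
          ≤ (mH / m - α * β) + (m - mH) / m := by
            rw [← hr]; exact add_le_add hsum hsd2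
        _ = 1 - α * β := hfin
  rw [modularity]
  apply csSup_le
  · exact ⟨modScore G (Finpartition.indiscrete (Finset.nonempty_iff_ne_empty.1 hVne)),
      ⟨_, rfl⟩⟩
  · rintro x ⟨P, rfl⟩
    exact hbound P
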